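/- For every α > 0 there exist constants c₁, c₂, c₃ > 0 and c₄ ∈ ℝ (depending on α, n, m and the matrices J_k) such that for every (x,t) ∈ G*: N(x,t)^{2α−4} |x|² ( c₁ − c₂ / N(x,t)^α ) ≤ V_α(x,t) ≤ N(x,t)^{2α−4} |x|² ( c₃ − c₄ / N(x,t)^α ). -/

import Mathlib

open MeasureTheory Filter
open scoped BigOperators ENNReal NNReal

noncomputable section

/-- Points of the Métivier group `G = ℝ^{2n} × ℝ^m`. -/
abbrev GrpPt (n m : ℕ) := (Fin (2*n) → ℝ) × (Fin m → ℝ)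

/-- Euclidean norm on `Fin k → ℝ`. -/
def e2norm {k : ℕ} (x : Fin k → ℝ) : ℝ := Real.sqrt (∑ i, (x i)^2)

/-- Kaplan norm `N(x,t) = (|x|^4 + 16|t|^2)^(1/4)`. -/
def kN {n m : ℕ} (p : GrpPt n m) : ℝ := (e2norm p.1 ^ 4 + 16 * e2norm p.2 ^ 2) ^ ((1:ℝ)/4)

/-- Group multiplication of the Métivier group. -/
def gmul {n m : ℕ} (J : Fin m → Matrix (Fin (2*n)) (Fin (2*n)) ℝ) (p q : GrpPt n m) : GrpPt n m :=
  (p.1 + q.1, p.2 + q.2 + fun k => (1/2 : ℝ) * ∑ i, (J k).mulVec p.1 i * q.1 i)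

/-- Horizontal left-invariant vector field `X_j`. -/
def XD {n m : ℕ} (J : Fin m → Matrix (Fin (2*n)) (Fin (2*n)) ℝ)
    {E : Type*} [NormedAddCommGroup E] [NormedSpace ℝ E]
    (j : Fin (2*n)) (f : GrpPt n m → E) (p : GrpPt n m) : E :=
  fderiv ℝ f p (Pi.single j 1, 0)
    + (1/2 : ℝ) • ∑ k, ((J k).mulVec p.1 j) • fderiv ℝ f p (0, Pi.single k 1)

/-- Squared length of the horizontal gradient. -/
def gradSq {n m : ℕ} (J : Fin m → Matrix (Fin (2*n)) (Fin (2*n)) ℝ)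
    (f : GrpPt n m → ℝ) (p : GrpPt n m) : ℝ := ∑ j, (XD J j f p)^2

/-- Sub-Laplacian `L f = -∑ X_j (X_j f)`. -/
def LSub {n m : ℕ} (J : Fin m → Matrix (Fin (2*n)) (Fin (2*n)) ℝ)
    {E : Type*} [NormedAddCommGroup E] [NormedSpace ℝ E]
    (f : GrpPt n m → E) (p : GrpPt n m) : E := - ∑ j, XD J j (XD J j f) p

/-- Weight `w_α = exp (-N^α)`. -/
def wA {n m : ℕ} (α : ℝ) (p : GrpPt n m) : ℝ := Real.exp (-(kN p ^ α))

/-- Potential `V_α = -(1/4) |grad w_α|²/w_α² - (1/2) (L w_α)/w_α`. -/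
def VA {n m : ℕ} (J : Fin m → Matrix (Fin (2*n)) (Fin (2*n)) ℝ) (α : ℝ) (p : GrpPt n m) : ℝ :=
  -(1/4) * gradSq J (wA α) p / (wA α p)^2 - (1/2) * LSub J (wA α) p / wA α p

/-!
Write `Q = |x|⁴ + 16|t|²`, so that `N = Q^{1/4}` and `w_α = exp (-Q^β)` with `β = α/4`.
Since each `X_j` is a derivation, the potential of `exp (-Q^β)` is
`(β²/4) Q^{2β-2} |∇_H Q|² - (β(β-1)/2) Q^{β-2} |∇_H Q|² + (β/2) Q^{β-1} L Q`.
Here `∇_H Q = 4|x|² x + 16 J_t x`, and skew-symmetry kills the cross term, so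
`|∇_H Q|² = 16|x|⁶ + 256|J_t x|²`, while `-L Q = (8n+8)|x|² + 8 ∑_k |J_k x|²`.
The Métivier condition and compactness of the product of unit spheres give
`c |x|²|t|² ≤ |J_t x|² ≤ C |x|²|t|²`, so `|∇_H Q|²` is comparable to `|x|² Q` and `-L Q` is
at most a multiple of `|x|²`; inserted into the formula above, these give both bounds.
-/

open Matrix Topology

@[fun_prop]
theorem Differentiable.dotProduct {E ι : Type*} [NormedAddCommGroup E] [NormedSpace ℝ E]
    [Fintype ι] {f g : E → ι → ℝ} (hf : Differentiable ℝ f) (hg : Differentiable ℝ g) :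
    Differentiable ℝ (fun x => f x ⬝ᵥ g x) := by
  unfold _root_.dotProduct; fun_prop

@[fun_prop]
theorem Differentiable.mulVec {E ι κ : Type*} [NormedAddCommGroup E] [NormedSpace ℝ E]
    [Fintype ι] (A : Matrix κ ι ℝ) {f : E → ι → ℝ} (hf : Differentiable ℝ f) :
    Differentiable ℝ (fun x => A *ᵥ f x) := by
  unfold Matrix.mulVec; fun_prop

theorem IsCompact.exists_pos_bounds {X : Type*} [TopologicalSpace X] {K : Set X}
    (hK : IsCompact K) {φ : X → ℝ} (hφ : ContinuousOn φ K) (hpos : ∀ z ∈ K, 0 < φ z) :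
    ∃ c C, 0 < c ∧ ∀ z ∈ K, c ≤ φ z ∧ φ z ≤ C := by
  rcases K.eq_empty_or_nonempty with rfl | hne
  · exact ⟨1, 1, one_pos, by simp⟩
  obtain ⟨z₀, hz₀, hmin⟩ := hK.exists_isMinOn hne hφ
  obtain ⟨z₁, -, hmax⟩ := hK.exists_isMaxOn hne hφ
  exact ⟨φ z₀, φ z₁, hpos z₀ hz₀, fun z hz => ⟨hmin hz, hmax hz⟩⟩

theorem exists_bounds_of_biquadratic {E F : Type*} [NormedAddCommGroup E] [NormedSpace ℝ E]
    [ProperSpace E] [NormedAddCommGroup F] [NormedSpace ℝ F] [ProperSpace F] {φ : E → F → ℝ}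
    (hφ : Continuous (Function.uncurry φ))
    (hhom : ∀ (a b : ℝ) x y, φ (a • x) (b • y) = (a * b) ^ 2 * φ x y)
    (hpos : ∀ x y, x ≠ 0 → y ≠ 0 → 0 < φ x y) :
    ∃ c C, 0 < c ∧ ∀ x y, c * ‖x‖ ^ 2 * ‖y‖ ^ 2 ≤ φ x y ∧ φ x y ≤ C * ‖x‖ ^ 2 * ‖y‖ ^ 2 := by
  obtain ⟨c, C, hc, hK⟩ := ((isCompact_sphere (0 : E) 1).prod (isCompact_sphere (0 : F) 1))
    |>.exists_pos_bounds hφ.continuousOn fun z hz =>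
      hpos _ _ (ne_zero_of_mem_unit_sphere ⟨_, hz.1⟩) (ne_zero_of_mem_unit_sphere ⟨_, hz.2⟩)
  refine ⟨c, C, hc, fun x y => ?_⟩
  rcases eq_or_ne x 0 with rfl | hx
  · simp [show φ 0 y = 0 by simpa using hhom 0 1 0 y]
  rcases eq_or_ne y 0 with rfl | hy
  · simp [show φ x 0 = 0 by simpa using hhom 1 0 x 0]
  have hscale : φ x y = (‖x‖ * ‖y‖) ^ 2 * φ (‖x‖⁻¹ • x) (‖y‖⁻¹ • y) := by
    rw [← hhom, smul_inv_smul₀ (norm_ne_zero_iff.2 hx), smul_inv_smul₀ (norm_ne_zero_iff.2 hy)]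
  have hmem : (‖x‖⁻¹ • x, ‖y‖⁻¹ • y) ∈ Metric.sphere (0 : E) 1 ×ˢ Metric.sphere (0 : F) 1 := by
    simp [norm_smul, hx, hy]
  obtain ⟨hlo, hhi⟩ : c ≤ φ _ _ ∧ φ _ _ ≤ C := hK _ hmem
  have hxy : 0 ≤ (‖x‖ * ‖y‖) ^ 2 := sq_nonneg _
  rw [hscale]
  constructor
  · calc c * ‖x‖ ^ 2 * ‖y‖ ^ 2 = (‖x‖ * ‖y‖) ^ 2 * c := by ring
      _ ≤ _ := mul_le_mul_of_nonneg_left hlo hxy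
  · calc _ ≤ (‖x‖ * ‖y‖) ^ 2 * C := mul_le_mul_of_nonneg_left hhi hxy
      _ = C * ‖x‖ ^ 2 * ‖y‖ ^ 2 := by ring

section Pencil

variable {ι κ : Type*} [Fintype ι] [Fintype κ]

def pencil (J : κ → Matrix ι ι ℝ) (t : κ → ℝ) : Matrix ι ι ℝ := ∑ k, t k • J k

theorem pencil_mulVec_apply (J : κ → Matrix ι ι ℝ) (t : κ → ℝ) (x : ι → ℝ) (i : ι) :
    (pencil J t *ᵥ x) i = ∑ k, t k * (J k *ᵥ x) i := by
  simp [pencil, sum_mulVec, smul_mulVec, Finset.sum_apply]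

omit [Fintype ι] in
theorem transpose_pencil {J : κ → Matrix ι ι ℝ} (hskew : ∀ k, (J k)ᵀ = -J k) (t : κ → ℝ) :
    (pencil J t)ᵀ = -pencil J t := by
  simp [pencil, transpose_sum, hskew]

theorem dotProduct_mulVec_self_of_transpose_eq_neg {A : Matrix ι ι ℝ} (hA : Aᵀ = -A)
    (x : ι → ℝ) : x ⬝ᵥ (A *ᵥ x) = 0 := by
  have h : x ⬝ᵥ (A *ᵥ x) = (Aᵀ *ᵥ x) ⬝ᵥ x := by rw [mulVec_transpose, dotProduct_mulVec]
  rw [hA, neg_mulVec, neg_dotProduct, dotProduct_comm (A *ᵥ x)] at h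
  linarith

omit [Fintype ι] in
theorem diag_eq_zero_of_transpose_eq_neg {A : Matrix ι ι ℝ} (hA : Aᵀ = -A) (i : ι) :
    A i i = 0 := by
  have h := congrFun (congrFun hA i) i
  rw [transpose_apply, neg_apply] at h
  linarith

theorem dotProduct_self_nonneg (x : ι → ℝ) : 0 ≤ x ⬝ᵥ x := by
  simpa using dotProduct_star_self_nonneg x

theorem norm_toLp_sq (x : ι → ℝ) : ‖WithLp.toLp 2 x‖ ^ 2 = x ⬝ᵥ x := by
  rw [EuclideanSpace.real_norm_sq_eq]
  simp [dotProduct, sq]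

theorem exists_pencil_bounds [DecidableEq ι] {J : κ → Matrix ι ι ℝ}
    (hMet : ∀ t : κ → ℝ, t ≠ 0 → IsUnit (∑ k, t k • J k)) :
    ∃ c C, 0 < c ∧ ∀ x t, c * (x ⬝ᵥ x) * (t ⬝ᵥ t) ≤ (pencil J t *ᵥ x) ⬝ᵥ (pencil J t *ᵥ x)
      ∧ (pencil J t *ᵥ x) ⬝ᵥ (pencil J t *ᵥ x) ≤ C * (x ⬝ᵥ x) * (t ⬝ᵥ t) := by
  obtain ⟨c, C, hc, h⟩ := exists_bounds_of_biquadratic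
    (φ := fun (u : EuclideanSpace ℝ ι) (v : EuclideanSpace ℝ κ) =>
      (pencil J v.ofLp *ᵥ u.ofLp) ⬝ᵥ (pencil J v.ofLp *ᵥ u.ofLp))
    (by unfold pencil; fun_prop)
    (fun a b u v => by
      simp only [WithLp.ofLp_smul, pencil, Pi.smul_apply, smul_eq_mul, ← smul_smul,
        ← Finset.smul_sum, smul_mulVec, mulVec_smul, smul_dotProduct, dotProduct_smul]
      ring)
    (fun u v hu hv => by
      have hx : u.ofLp ≠ 0 := by simpa using hu
      have ht : v.ofLp ≠ 0 := by simpa using hv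
      have hy : pencil J v.ofLp *ᵥ u.ofLp ≠ 0 := fun h =>
        hx (mulVec_injective_iff_isUnit.2 (hMet _ ht) (by rw [mulVec_zero]; exact h))
      exact (dotProduct_self_nonneg _).lt_of_ne' (dotProduct_self_eq_zero.not.2 hy))
  refine ⟨c, C, hc, fun x t => ?_⟩
  simpa [norm_toLp_sq] using h (WithLp.toLp 2 x) (WithLp.toLp 2 t)

end Pencil

section ExpNegRpow

variable {β s : ℝ}

theorem hasDerivAt_exp_neg_rpow (hs : 0 < s) :
    HasDerivAt (fun s => Real.exp (-(s ^ β))) (-β * s ^ (β - 1) * Real.exp (-(s ^ β))) s := by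
  simpa [mul_comm] using ((Real.hasDerivAt_rpow_const (p := β) (Or.inl hs.ne')).neg).exp

theorem hasDerivAt_deriv_exp_neg_rpow (hs : 0 < s) :
    HasDerivAt (fun s => -β * s ^ (β - 1) * Real.exp (-(s ^ β)))
      ((-β * ((β - 1) * s ^ (β - 2)) + (β * s ^ (β - 1)) ^ 2) * Real.exp (-(s ^ β))) s := by
  have h : HasDerivAt (fun s => -β * s ^ (β - 1)) (-β * ((β - 1) * s ^ (β - 2))) s := by
    simpa [show β - 1 - 1 = β - 2 by ring] using
      (Real.hasDerivAt_rpow_const (p := β - 1) (Or.inl hs.ne')).const_mul (-β)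
  exact (h.fun_mul (hasDerivAt_exp_neg_rpow hs)).congr_deriv (by ring)

end ExpNegRpow

def potentialProfile (β s G L : ℝ) : ℝ :=
  (1/4) * (β * s ^ (β - 1)) ^ 2 * G - (1/2) * (β * (β - 1) * s ^ (β - 2)) * G
    + (1/2) * (β * s ^ (β - 1)) * L

theorem potentialProfile_bounds {β s a G L d₁ d₂ e : ℝ} (hβ : 0 < β) (hs : 0 < s)
    (hG₀ : 0 ≤ G) (hG : d₁ * a * s ≤ G ∧ G ≤ d₂ * a * s) (hL : -(e * a) ≤ L ∧ L ≤ 0) :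
    s ^ (2 * β - 1) * a * (β ^ 2 * d₁ / 4 - (β * |β - 1| * d₂ / 2 + β * e / 2) / s ^ β)
        ≤ potentialProfile β s G L
      ∧ potentialProfile β s G L
        ≤ s ^ (2 * β - 1) * a * (β ^ 2 * d₂ / 4 - -(β * |β - 1| * d₂ / 2) / s ^ β) := by
  set u := s ^ (β - 1)
  have hu : 0 < u := Real.rpow_pos_of_pos hs _
  have hpow : ∀ r : ℝ, s ^ (β - 1 + r) = u * s ^ r := fun r => Real.rpow_add hs _ _
  have h2β : s ^ (2 * β - 1) = u ^ 2 * s := by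
    rw [show 2 * β - 1 = β - 1 + (β - 1 + 1) by ring, hpow, hpow, Real.rpow_one]; ring
  have hβ1 : s ^ β = u * s := by rw [show β = β - 1 + 1 by ring, hpow, Real.rpow_one]
  have hβ2 : s ^ (β - 2) = u / s := by
    rw [eq_div_iff hs.ne', show β - 2 = β - 1 + -1 by ring, hpow, Real.rpow_neg_one,
      mul_assoc, inv_mul_cancel₀ hs.ne', mul_one]
  have hmid : |β * (β - 1) * (u / s) * G| ≤ β * |β - 1| * d₂ * a * u := by
    rw [abs_mul, abs_mul, abs_mul, abs_of_pos hβ, abs_of_pos (div_pos hu hs), abs_of_nonneg hG₀]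
    calc β * |β - 1| * (u / s) * G ≤ β * |β - 1| * (u / s) * (d₂ * a * s) :=
          mul_le_mul_of_nonneg_left hG.2 (by positivity)
      _ = β * |β - 1| * d₂ * a * u := by field_simp
  have hfirst₁ := mul_le_mul_of_nonneg_left hG.1 (by positivity : 0 ≤ (β * u) ^ 2)
  have hfirst₂ := mul_le_mul_of_nonneg_left hG.2 (by positivity : 0 ≤ (β * u) ^ 2)
  have hlast := mul_le_mul_of_nonneg_left hL.1 (by positivity : 0 ≤ β * u)
  have hlast' := mul_nonpos_of_nonneg_of_nonpos (by positivity : 0 ≤ β * u) hL.2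
  have hexpand : ∀ X Y : ℝ, u ^ 2 * s * a * (X - Y / (u * s)) = X * u ^ 2 * s * a - Y * a * u := by
    intro X Y; field_simp
  unfold potentialProfile
  rw [h2β, hβ1, hβ2, hexpand, hexpand]
  constructor <;> linarith [abs_le.1 hmid]

section HorizontalCalculus

variable {n m : ℕ} (J : Fin m → Matrix (Fin (2*n)) (Fin (2*n)) ℝ) (j : Fin (2*n))

def horizontalVec (p : GrpPt n m) : GrpPt n m :=
  (Pi.single j 1, fun k => (1/2 : ℝ) * (J k *ᵥ p.1) j)

theorem XD_eq_fderiv_apply {E : Type*} [NormedAddCommGroup E] [NormedSpace ℝ E]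
    (f : GrpPt n m → E) (p : GrpPt n m) : XD J j f p = fderiv ℝ f p (horizontalVec J j p) := by
  have hv : horizontalVec J j p = (Pi.single j 1, 0)
      + ∑ k, ((1/2 : ℝ) * (J k *ᵥ p.1) j) • ((0, Pi.single k 1) : GrpPt n m) := by
    ext i <;> simp [horizontalVec, Prod.fst_sum, Prod.snd_sum, Finset.sum_apply, Pi.single_apply]
  rw [XD, hv, map_add, map_sum]
  simp only [map_smul, Finset.smul_sum, smul_smul]

variable {J j} {p : GrpPt n m} {f g : GrpPt n m → ℝ}

theorem XD_congr (h : f =ᶠ[𝓝 p] g) : XD J j f p = XD J j g p := by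
  simp only [XD_eq_fderiv_apply, h.fderiv_eq]

theorem XD_const (c : ℝ) : XD J j (fun _ => c) p = 0 := by
  simp [XD_eq_fderiv_apply]

theorem XD_add (hf : DifferentiableAt ℝ f p) (hg : DifferentiableAt ℝ g p) :
    XD J j (fun q => f q + g q) p = XD J j f p + XD J j g p := by
  simp only [XD_eq_fderiv_apply, fderiv_fun_add hf hg, _root_.add_apply]

theorem XD_mul (hf : DifferentiableAt ℝ f p) (hg : DifferentiableAt ℝ g p) :
    XD J j (fun q => f q * g q) p = XD J j f p * g p + f p * XD J j g p := by
  simp only [XD_eq_fderiv_apply, fderiv_fun_mul hf hg]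
  simp only [_root_.add_apply, _root_.smul_apply, smul_eq_mul]
  ring

theorem XD_const_mul (c : ℝ) (hf : DifferentiableAt ℝ f p) :
    XD J j (fun q => c * f q) p = c * XD J j f p := by
  simp only [XD_eq_fderiv_apply, fderiv_const_mul hf, _root_.smul_apply, smul_eq_mul]

theorem XD_sum {ι : Type*} (s : Finset ι) {f : ι → GrpPt n m → ℝ}
    (hf : ∀ i ∈ s, DifferentiableAt ℝ (f i) p) :
    XD J j (fun q => ∑ i ∈ s, f i q) p = ∑ i ∈ s, XD J j (f i) p := by
  simp only [XD_eq_fderiv_apply, fderiv_fun_sum hf, _root_.sum_apply]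

theorem XD_comp {φ : ℝ → ℝ} {φ' : ℝ} (hφ : HasDerivAt φ φ' (f p))
    (hf : DifferentiableAt ℝ f p) :
    XD J j (fun q => φ (f q)) p = φ' * XD J j f p := by
  simp only [XD_eq_fderiv_apply]
  rw [show (fun q => φ (f q)) = φ ∘ f from rfl, (hφ.comp_hasFDerivAt p hf.hasFDerivAt).fderiv]
  simp

theorem XD_fst_apply (i : Fin (2*n)) :
    XD J j (fun q => q.1 i) p = (Pi.single j 1 : Fin (2*n) → ℝ) i := by
  rw [XD_eq_fderiv_apply, show (fun q : GrpPt n m => q.1 i)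
    = ⇑((ContinuousLinearMap.proj i).comp (ContinuousLinearMap.fst ℝ _ _)) from rfl,
    ContinuousLinearMap.fderiv]
  rfl

theorem XD_snd_apply (k : Fin m) : XD J j (fun q => q.2 k) p = (1/2) * (J k *ᵥ p.1) j := by
  rw [XD_eq_fderiv_apply, show (fun q : GrpPt n m => q.2 k)
    = ⇑((ContinuousLinearMap.proj k).comp (ContinuousLinearMap.snd ℝ _ _)) from rfl,
    ContinuousLinearMap.fderiv]
  rfl

end HorizontalCalculus

section GroundState

variable {n m : ℕ} {J : Fin m → Matrix (Fin (2*n)) (Fin (2*n)) ℝ} {j : Fin (2*n)}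
  {f : GrpPt n m → ℝ} {β : ℝ} {p : GrpPt n m}

theorem XD_exp_neg_rpow (hf : DifferentiableAt ℝ f p) (hp : 0 < f p) :
    XD J j (fun q => Real.exp (-(f q ^ β))) p
      = -β * f p ^ (β - 1) * Real.exp (-(f p ^ β)) * XD J j f p :=
  XD_comp (hasDerivAt_exp_neg_rpow hp) hf

theorem XD_XD_exp_neg_rpow (hf : Differentiable ℝ f) (hXf : DifferentiableAt ℝ (XD J j f) p)
    (hp : 0 < f p) :
    XD J j (XD J j (fun q => Real.exp (-(f q ^ β)))) p
      = (-β * ((β - 1) * f p ^ (β - 2)) + (β * f p ^ (β - 1)) ^ 2) * Real.exp (-(f p ^ β))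
          * XD J j f p ^ 2
        + -β * f p ^ (β - 1) * Real.exp (-(f p ^ β)) * XD J j (XD J j f) p := by
  have hnear : XD J j (fun q => Real.exp (-(f q ^ β)))
      =ᶠ[𝓝 p] fun q => -β * f q ^ (β - 1) * Real.exp (-(f q ^ β)) * XD J j f q := by
    filter_upwards [hf.continuous.continuousAt.eventually (lt_mem_nhds hp)] with q hq
    exact XD_exp_neg_rpow (hf q) hq
  have hφ := hasDerivAt_deriv_exp_neg_rpow (β := β) hp
  rw [XD_congr hnear, XD_mul (f := fun q => -β * f q ^ (β - 1) * Real.exp (-(f q ^ β)))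
    (hφ.differentiableAt.comp p (hf p)) hXf, XD_comp hφ (hf p)]
  ring

theorem groundStatePotential_exp_neg_rpow {w : GrpPt n m → ℝ}
    (hw : w = fun q => Real.exp (-(f q ^ β))) (hf : Differentiable ℝ f)
    (hXf : ∀ j, DifferentiableAt ℝ (XD J j f) p) (hp : 0 < f p) :
    -(1/4) * gradSq J w p / w p ^ 2 - (1/2) * LSub J w p / w p
      = potentialProfile β (f p) (gradSq J f p) (LSub J f p) := by
  subst hw
  simp only [gradSq, LSub, XD_exp_neg_rpow (hf p) hp, XD_XD_exp_neg_rpow hf (hXf _) hp, mul_pow,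
    Finset.sum_add_distrib, ← Finset.mul_sum, potentialProfile]
  have he : Real.exp (-(f p ^ β)) ≠ 0 := (Real.exp_pos _).ne'
  field_simp
  ring

end GroundState

section KaplanQuartic

variable {n m : ℕ} {J : Fin m → Matrix (Fin (2*n)) (Fin (2*n)) ℝ} {j : Fin (2*n)}
  {p : GrpPt n m} {c C : ℝ}

def kaplanQuartic (p : GrpPt n m) : ℝ := (p.1 ⬝ᵥ p.1) ^ 2 + 16 * (p.2 ⬝ᵥ p.2)

theorem e2norm_sq {k : ℕ} (x : Fin k → ℝ) : e2norm x ^ 2 = x ⬝ᵥ x := by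
  rw [e2norm, Real.sq_sqrt (by positivity)]
  simp [dotProduct, sq]

theorem kN_rpow (α : ℝ) : kN p ^ α = kaplanQuartic p ^ (α / 4) := by
  have hQ : e2norm p.1 ^ 4 + 16 * e2norm p.2 ^ 2 = kaplanQuartic p := by
    rw [kaplanQuartic, ← e2norm_sq, ← e2norm_sq]; ring
  rw [kN, hQ, ← Real.rpow_mul (hQ ▸ by positivity)]
  ring_nf

theorem kaplanQuartic_pos (hp : p ≠ 0) : 0 < kaplanQuartic p := by
  have hx := dotProduct_self_nonneg p.1
  have ht := dotProduct_self_nonneg p.2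
  by_contra! h
  have hx0 : p.1 ⬝ᵥ p.1 = 0 := by rw [kaplanQuartic] at h; nlinarith
  have ht0 : p.2 ⬝ᵥ p.2 = 0 := by rw [kaplanQuartic] at h; nlinarith
  exact hp (Prod.ext (dotProduct_self_eq_zero.1 hx0) (dotProduct_self_eq_zero.1 ht0))

theorem differentiable_kaplanQuartic : Differentiable ℝ (kaplanQuartic (n := n) (m := m)) := by
  unfold kaplanQuartic dotProduct; fun_prop

theorem XD_dotProduct_self_fst : XD J j (fun q => q.1 ⬝ᵥ q.1) p = 2 * p.1 j := by
  simp only [dotProduct]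
  rw [XD_sum _ fun i _ => by fun_prop]
  simp (disch := fun_prop) only [XD_mul, XD_fst_apply, Pi.single_apply, ite_mul, one_mul,
    zero_mul, mul_ite, mul_one, mul_zero, Finset.sum_add_distrib, Finset.sum_ite_eq',
    Finset.mem_univ, ↓reduceIte]
  ring

theorem XD_dotProduct_self_snd : XD J j (fun q => q.2 ⬝ᵥ q.2) p = (pencil J p.2 *ᵥ p.1) j := by
  simp only [dotProduct]
  rw [XD_sum _ fun i _ => by fun_prop, pencil_mulVec_apply]
  simp (disch := fun_prop) only [XD_mul, XD_snd_apply]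
  exact Finset.sum_congr rfl fun k _ => by ring

theorem XD_mulVec_fst_apply (A : Matrix (Fin (2*n)) (Fin (2*n)) ℝ) (i : Fin (2*n)) :
    XD J j (fun q => (A *ᵥ q.1) i) p = A i j := by
  simp only [mulVec, dotProduct]
  rw [XD_sum _ fun i _ => by fun_prop]
  simp (disch := fun_prop) [XD_const_mul, XD_fst_apply, Pi.single_apply]

theorem XD_kaplanQuartic :
    XD J j kaplanQuartic p = 4 * (p.1 ⬝ᵥ p.1) * p.1 j + 16 * (pencil J p.2 *ᵥ p.1) j := by
  unfold kaplanQuartic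
  rw [XD_add (by fun_prop) (by fun_prop), XD_comp (hasDerivAt_pow 2 _) (by fun_prop),
    XD_const_mul _ (by fun_prop), XD_dotProduct_self_fst, XD_dotProduct_self_snd]
  ring

theorem XD_kaplanQuartic_eq : XD J j kaplanQuartic
    = fun q => 4 * (q.1 ⬝ᵥ q.1) * q.1 j + 16 * ∑ k, q.2 k * (J k *ᵥ q.1) j :=
  funext fun q => by rw [XD_kaplanQuartic, pencil_mulVec_apply]

theorem differentiable_XD_kaplanQuartic : Differentiable ℝ (XD J j kaplanQuartic) := by
  rw [XD_kaplanQuartic_eq]; fun_prop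

theorem XD_XD_kaplanQuartic (hskew : ∀ k, (J k)ᵀ = -J k) :
    XD J j (XD J j kaplanQuartic) p
      = 4 * (p.1 ⬝ᵥ p.1) + 8 * p.1 j ^ 2 + 8 * ∑ k, (J k *ᵥ p.1) j ^ 2 := by
  rw [XD_kaplanQuartic_eq]
  simp (disch := fun_prop) only [XD_add, XD_mul, XD_const, XD_sum, XD_dotProduct_self_fst,
    XD_fst_apply, Pi.single_eq_same, XD_snd_apply, XD_mulVec_fst_apply,
    diag_eq_zero_of_transpose_eq_neg (hskew _), zero_mul, zero_add, mul_one, mul_zero, add_zero]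
  simp only [Finset.mul_sum]
  ring_nf

theorem gradSq_kaplanQuartic (hskew : ∀ k, (J k)ᵀ = -J k) :
    gradSq J kaplanQuartic p = 16 * (p.1 ⬝ᵥ p.1) ^ 3
      + 256 * ((pencil J p.2 *ᵥ p.1) ⬝ᵥ (pencil J p.2 *ᵥ p.1)) := by
  set y := pencil J p.2 *ᵥ p.1
  have hxy : p.1 ⬝ᵥ y = 0 := dotProduct_mulVec_self_of_transpose_eq_neg (transpose_pencil hskew _) _
  have h : ∀ a b : ℝ, ∑ i, (a * p.1 i + b * y i) ^ 2
      = a ^ 2 * (p.1 ⬝ᵥ p.1) + 2 * a * b * (p.1 ⬝ᵥ y) + b ^ 2 * (y ⬝ᵥ y) := by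
    intro a b
    simp only [dotProduct, Finset.mul_sum, ← Finset.sum_add_distrib]
    exact Finset.sum_congr rfl fun i _ => by ring
  simp only [gradSq, XD_kaplanQuartic]
  rw [h, hxy]
  ring

theorem LSub_kaplanQuartic (hskew : ∀ k, (J k)ᵀ = -J k) :
    LSub J kaplanQuartic p
      = -((8 * n + 8) * (p.1 ⬝ᵥ p.1) + 8 * ∑ k, (J k *ᵥ p.1) ⬝ᵥ (J k *ᵥ p.1)) := by
  simp only [LSub, XD_XD_kaplanQuartic hskew, Finset.sum_add_distrib, ← Finset.mul_sum,
    Finset.sum_const, Finset.card_univ, Fintype.card_fin, nsmul_eq_mul]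
  rw [Finset.sum_comm]
  simp only [dotProduct, sq]
  push_cast
  ring

theorem VA_eq_potentialProfile (α : ℝ) (hp : p ≠ 0) :
    VA J α p = potentialProfile (α / 4) (kaplanQuartic p)
      (gradSq J kaplanQuartic p) (LSub J kaplanQuartic p) :=
  groundStatePotential_exp_neg_rpow (funext fun q => by rw [wA, kN_rpow])
    differentiable_kaplanQuartic (fun _ => differentiable_XD_kaplanQuartic p) (kaplanQuartic_pos hp)

theorem gradSq_kaplanQuartic_bounds (hskew : ∀ k, (J k)ᵀ = -J k)
    (hJ : ∀ x t, c * (x ⬝ᵥ x) * (t ⬝ᵥ t) ≤ (pencil J t *ᵥ x) ⬝ᵥ (pencil J t *ᵥ x)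
      ∧ (pencil J t *ᵥ x) ⬝ᵥ (pencil J t *ᵥ x) ≤ C * (x ⬝ᵥ x) * (t ⬝ᵥ t)) :
    min 16 (16 * c) * (p.1 ⬝ᵥ p.1) * kaplanQuartic p ≤ gradSq J kaplanQuartic p
      ∧ gradSq J kaplanQuartic p ≤ max 16 (16 * C) * (p.1 ⬝ᵥ p.1) * kaplanQuartic p := by
  have hx := dotProduct_self_nonneg p.1
  have ht := dotProduct_self_nonneg p.2
  have hxt : 0 ≤ (p.1 ⬝ᵥ p.1) * (p.2 ⬝ᵥ p.2) := mul_nonneg hx ht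
  have hx3 : 0 ≤ (p.1 ⬝ᵥ p.1) ^ 3 := pow_nonneg hx 3
  obtain ⟨hlo, hhi⟩ := hJ p.1 p.2
  rw [gradSq_kaplanQuartic hskew, kaplanQuartic]
  constructor
  · nlinarith [min_le_left 16 (16 * c), min_le_right 16 (16 * c)]
  · nlinarith [le_max_left 16 (16 * C), le_max_right 16 (16 * C)]

theorem LSub_kaplanQuartic_bounds (hskew : ∀ k, (J k)ᵀ = -J k)
    (hJ : ∀ x t, (pencil J t *ᵥ x) ⬝ᵥ (pencil J t *ᵥ x) ≤ C * (x ⬝ᵥ x) * (t ⬝ᵥ t)) :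
    -((8 * n + 8 + 8 * m * |C|) * (p.1 ⬝ᵥ p.1)) ≤ LSub J kaplanQuartic p
      ∧ LSub J kaplanQuartic p ≤ 0 := by
  have hx := dotProduct_self_nonneg p.1
  have hk : ∀ k, (J k *ᵥ p.1) ⬝ᵥ (J k *ᵥ p.1) ≤ |C| * (p.1 ⬝ᵥ p.1) := fun k => by
    have hJk : pencil J (Pi.single k 1) = J k := by simp [pencil, Pi.single_apply]
    have hek : Pi.single k 1 ⬝ᵥ Pi.single k (1 : ℝ) = 1 := by simp
    have h := hJ p.1 (Pi.single k 1)
    rw [hJk, hek, mul_one] at h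
    exact h.trans (mul_le_mul_of_nonneg_right (le_abs_self C) hx)
  have hsum := Finset.sum_le_sum fun k (_ : k ∈ Finset.univ) => hk k
  have hsum₀ := Finset.sum_nonneg fun k (_ : k ∈ Finset.univ) => dotProduct_self_nonneg (J k *ᵥ p.1)
  rw [Finset.sum_const, Finset.card_univ, Fintype.card_fin, nsmul_eq_mul] at hsum
  rw [LSub_kaplanQuartic hskew]
  constructor <;> nlinarith

end KaplanQuartic

theorem potential_bounds_general (n m : ℕ)
    (J : Fin m → Matrix (Fin (2*n)) (Fin (2*n)) ℝ)
    (hskew : ∀ k, (J k).transpose = -(J k))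
    (hMet : ∀ t : Fin m → ℝ, t ≠ 0 → IsUnit (∑ k, t k • J k)) :
    ∀ α : ℝ, 0 < α → ∃ c₁ c₂ c₃ c₄ : ℝ, 0 < c₁ ∧ 0 < c₂ ∧ 0 < c₃ ∧
      ∀ p : GrpPt n m, p ≠ 0 →
        kN p ^ (2*α - 4) * e2norm p.1 ^ 2 * (c₁ - c₂ / kN p ^ α) ≤ VA J α p ∧
        VA J α p ≤ kN p ^ (2*α - 4) * e2norm p.1 ^ 2 * (c₃ - c₄ / kN p ^ α) := by
  intro α hα
  obtain ⟨c, C, hc, hJ⟩ := exists_pencil_bounds hMet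
  set β := α / 4
  have hβ : 0 < β := by positivity
  refine ⟨β ^ 2 * min 16 (16 * c) / 4,
    β * |β - 1| * max 16 (16 * C) / 2 + β * (8 * n + 8 + 8 * m * |C|) / 2,
    β ^ 2 * max 16 (16 * C) / 4, -(β * |β - 1| * max 16 (16 * C) / 2),
    by positivity, by positivity, by positivity, fun p hp => ?_⟩
  rw [VA_eq_potentialProfile α hp, kN_rpow, kN_rpow, e2norm_sq,
    show (2 * α - 4) / 4 = 2 * β - 1 by ring]
  exact potentialProfile_bounds hβ (kaplanQuartic_pos hp)
    (Finset.sum_nonneg fun _ _ => sq_nonneg _) (gradSq_kaplanQuartic_bounds hskew hJ)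
    (LSub_kaplanQuartic_bounds hskew fun x t => (hJ x t).2)

/-- Two-sided bound for the potential `V_α` on `G*`. -/
theorem potential_bounds (n m : ℕ) (hn : 1 ≤ n) (hm : 1 ≤ m)
    (J : Fin m → Matrix (Fin (2*n)) (Fin (2*n)) ℝ)
    (hskew : ∀ k, (J k).transpose = -(J k))
    (hMet : ∀ t : Fin m → ℝ, t ≠ 0 → IsUnit (∑ k, t k • J k)) :
    ∀ α : ℝ, 0 < α → ∃ c₁ c₂ c₃ c₄ : ℝ, 0 < c₁ ∧ 0 < c₂ ∧ 0 < c₃ ∧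
      ∀ p : GrpPt n m, p ≠ 0 →
        kN p ^ (2*α - 4) * e2norm p.1 ^ 2 * (c₁ - c₂ / kN p ^ α) ≤ VA J α p ∧
        VA J α p ≤ kN p ^ (2*α - 4) * e2norm p.1 ^ 2 * (c₃ - c₄ / kN p ^ α) :=
  potential_bounds_general n m J hskew hMet
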